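/- (Joint convexity of exponential collision relative entropy) The map (ρ, σ) ↦ exp D₂(ρ‖σ) = tr(σ^{−1/2}ρσ^{−1/2}ρ) is jointly convex on pairs of positive semidefinite matrices with supp ρ ⊆ supp σ: for ρ = Σᵢ pᵢρᵢ and σ = Σᵢ pᵢσᵢ with pᵢ a probability distribution, tr(σ^{−1/2}ρσ^{−1/2}ρ) ≤ Σᵢ pᵢ tr(σᵢ^{−1/2}ρᵢσᵢ^{−1/2}ρᵢ). -/

import Mathlib

open Matrix Kronecker ComplexOrder

/-- Apply a real function to a Hermitian matrix via its spectral decomposition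
(returns 0 on non-Hermitian input). -/
noncomputable def hermFun {n : Type*} [Fintype n] [DecidableEq n]
    (f : ℝ → ℝ) (A : Matrix n n ℂ) : Matrix n n ℂ :=
  if hA : A.IsHermitian then
    (hA.eigenvectorUnitary : Matrix n n ℂ) *
      Matrix.diagonal (fun i => (f (hA.eigenvalues i) : ℂ)) *
      (hA.eigenvectorUnitary : Matrix n n ℂ)ᴴ
  else 0

/-- Inverse square root of a positive semidefinite matrix, taken on its support. -/
noncomputable def pinvSqrt {n : Type*} [Fintype n] [DecidableEq n]
    (A : Matrix n n ℂ) : Matrix n n ℂ :=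
  hermFun (fun x => if x ≤ 0 then 0 else (Real.sqrt x)⁻¹) A


/-!
For Hermitian `W`, expanding `0 ≤ tr(V σ^{1/2} V σ^{1/2})` with `V = σ^{-1/2} ρ σ^{-1/2} - W` gives
`tr(σ^{-1/2} ρ σ^{-1/2} ρ) ≥ 2 tr(ρ W) - tr(W σ^{1/2} W σ^{1/2})`, with equality at
`W = σ^{-1/2} ρ σ^{-1/2}`. Taking that `W` for the averaged pair, joint convexity follows once
`σ ↦ tr(W σ^{1/2} W σ^{1/2})` is concave, the other term being linear in `ρ`.

That trace is the quadratic form of `vec W` against `(σ^{1/2})ᵀ ⊗ σ^{1/2}`, the geometric mean of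
the commuting positive operators `L = 1 ⊗ σ` and `R = σᵀ ⊗ 1`, so concavity is Ando's argument:
the block matrices `[[Lᵢ, Lᵢ # Rᵢ], [Lᵢ # Rᵢ, Rᵢ]]` are positive, hence so is their average, and
`[[L, Z], [Z, R]] ≥ 0` forces `Z ≤ L # R`. Indeed, by the Schur complement
`K = L^{-1/2} Z R^{-1/2}` is a contraction, and `L^{-1/4} R^{-1/4} Z L^{-1/4} R^{-1/4}` is
Hermitian and similar to `K`, so its eigenvalues are at most `1`.
-/

open scoped MatrixOrder

section FunctionalCalculus

variable {m : Type*} [Fintype m] [DecidableEq m] {A : Matrix m m ℂ}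

theorem hermFun_eq_cfc (hA : A.IsHermitian) (f : ℝ → ℝ) : hermFun f A = cfc f A := by
  rw [hA.cfc_eq, IsHermitian.cfc, hermFun, dif_pos hA, Unitary.conjStarAlgAut_apply]
  rfl

theorem pinvSqrt_eq_rpow (hA : A.PosDef) : pinvSqrt A = A ^ (-(1 / 2) : ℝ) := by
  rw [pinvSqrt, hermFun_eq_cfc hA.isHermitian, CFC.rpow_eq_cfc_real hA.posSemidef.nonneg]
  refine cfc_congr fun x hx => ?_
  have hx : 0 < x := by
    obtain ⟨i, rfl⟩ := hA.isHermitian.spectrum_real_eq_range_eigenvalues ▸ hx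
    exact hA.eigenvalues_pos i
  simp [not_le.2 hx, Real.sqrt_eq_rpow, Real.rpow_neg hx.le]

theorem posSemidef_rpow (A : Matrix m m ℂ) (r : ℝ) : (A ^ r).PosSemidef :=
  nonneg_iff_posSemidef.1 CFC.rpow_nonneg

theorem rpow_mul_rpow (hA : A.PosDef) (r s : ℝ) : A ^ r * A ^ s = A ^ (r + s) :=
  (CFC.rpow_add hA.isUnit).symm

end FunctionalCalculus

section Variational

variable {m : Type*} [Fintype m] [DecidableEq m] {A ρ W : Matrix m m ℂ}

theorem trace_mul_mul_mul_nonneg {V S : Matrix m m ℂ} (hV : V.IsHermitian) (hS : S.PosSemidef) :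
    0 ≤ (V * S * V * S).trace := by
  obtain ⟨hR, hRR⟩ : (CFC.sqrt S)ᴴ = CFC.sqrt S ∧ CFC.sqrt S * CFC.sqrt S = S :=
    ⟨(nonneg_iff_posSemidef.1 (CFC.sqrt_nonneg S)).isHermitian.eq,
      CFC.sqrt_mul_sqrt_self S hS.nonneg⟩
  -- `tr (V S V S) = tr ((√S V) S (√S V)ᴴ)` by cyclicity
  have h := (hS.mul_mul_conjTranspose_same (CFC.sqrt S * V)).trace_nonneg
  rwa [conjTranspose_mul, hV.eq, hR, Matrix.mul_assoc, Matrix.mul_assoc, trace_mul_comm,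
    Matrix.mul_assoc, Matrix.mul_assoc, Matrix.mul_assoc, hRR, ← Matrix.mul_assoc,
    ← Matrix.mul_assoc] at h

theorem two_mul_trace_mul_sub_le (hA : A.PosDef) (hρ : ρ.IsHermitian) (hW : W.IsHermitian) :
    2 * (ρ * W).trace - (W * A ^ (1 / 2 : ℝ) * W * A ^ (1 / 2 : ℝ)).trace ≤
      (A ^ (-(1 / 2) : ℝ) * ρ * A ^ (-(1 / 2) : ℝ) * ρ).trace := by
  set S := A ^ (1 / 2 : ℝ)
  set T := A ^ (-(1 / 2) : ℝ)
  have hTS : T * S = 1 := by rw [rpow_mul_rpow hA]; norm_num [CFC.rpow_zero A hA.posSemidef.nonneg]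
  have hST : S * T = 1 := by rw [rpow_mul_rpow hA]; norm_num [CFC.rpow_zero A hA.posSemidef.nonneg]
  have hV : (T * ρ * T - W).IsHermitian := by
    have hT : Tᴴ = T := (posSemidef_rpow A _).isHermitian.eq
    simpa only [hT] using (isHermitian_conjTranspose_mul_mul T hρ).sub hW
  have h0 := trace_mul_mul_mul_nonneg hV (posSemidef_rpow A (1 / 2))
  have hVS : (T * ρ * T - W) * S = T * ρ - W * S := by
    rw [Matrix.sub_mul, Matrix.mul_assoc (T * ρ), hTS, Matrix.mul_one]
  have h1 : (T * ρ * (W * S)).trace = (ρ * W).trace := by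
    rw [Matrix.mul_assoc, trace_mul_comm, Matrix.mul_assoc, Matrix.mul_assoc, hST, Matrix.mul_one]
  have h2 : (W * S * (T * ρ)).trace = (ρ * W).trace := by
    rw [Matrix.mul_assoc, ← Matrix.mul_assoc S, hST, Matrix.one_mul, trace_mul_comm]
  rw [Matrix.mul_assoc ((T * ρ * T - W) * S), hVS, Matrix.sub_mul, Matrix.mul_sub,
    Matrix.mul_sub, trace_sub, trace_sub, trace_sub, h1, h2] at h0
  rw [← sub_nonneg]
  convert h0 using 1
  simp only [Matrix.mul_assoc]
  ring

theorem two_mul_trace_mul_sub_eq (hA : A.PosDef)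
    (hW : W = A ^ (-(1 / 2) : ℝ) * ρ * A ^ (-(1 / 2) : ℝ)) :
    2 * (ρ * W).trace - (W * A ^ (1 / 2 : ℝ) * W * A ^ (1 / 2 : ℝ)).trace = (W * ρ).trace := by
  have hTS : A ^ (-(1 / 2) : ℝ) * A ^ (1 / 2 : ℝ) = 1 := by
    rw [rpow_mul_rpow hA]; norm_num [CFC.rpow_zero A hA.posSemidef.nonneg]
  have hWSWS : W * A ^ (1 / 2 : ℝ) * W * A ^ (1 / 2 : ℝ) = W * ρ := by
    simp only [hW, Matrix.mul_assoc, hTS, Matrix.mul_one]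
  rw [hWSWS, trace_mul_comm ρ]
  ring

end Variational

section Contraction

variable {N : Type*} [Fintype N]

theorem star_mulVec_dotProduct (A : Matrix N N ℂ) (u w : N → ℂ) :
    star (A *ᵥ u) ⬝ᵥ w = star u ⬝ᵥ (Aᴴ *ᵥ w) := by
  rw [star_mulVec, ← dotProduct_mulVec]

variable [DecidableEq N]

theorem sq_le_one_of_mulVec_eq_smul {K : Matrix N N ℂ} (hK : Kᴴ * K ≤ 1) {y : N → ℂ} (hy : y ≠ 0)
    {x : ℝ} (hKy : K *ᵥ y = (x : ℂ) • y) : x ^ 2 ≤ 1 := by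
  have hnonneg := (le_iff.1 hK).dotProduct_mulVec_nonneg y
  rw [sub_mulVec, one_mulVec, ← mulVec_mulVec, dotProduct_sub, ← star_mulVec_dotProduct, hKy,
    star_smul, smul_dotProduct, dotProduct_smul, Complex.star_def, Complex.conj_ofReal,
    smul_eq_mul, smul_eq_mul, ← mul_assoc, sub_nonneg] at hnonneg
  have hpos : 0 < star y ⬝ᵥ y := dotProduct_star_self_pos_iff.2 hy
  have := le_of_mul_le_mul_right (hnonneg.trans_eq (one_mul _).symm) hpos
  exact_mod_cast (by simpa [sq] using this : ((x ^ 2 : ℝ) : ℂ) ≤ 1)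

theorem le_one_of_similar_contraction {E K C : Matrix N N ℂ} (hE : E.IsHermitian) (hC : IsUnit C)
    (hKC : K * C = C * E) (hK : Kᴴ * K ≤ 1) : E ≤ 1 := by
  refine CFC.le_one (R := ℝ) (fun x hx => ?_) hE.isSelfAdjoint
  obtain ⟨i, rfl⟩ := hE.spectrum_real_eq_range_eigenvalues ▸ hx
  have he : ⇑(hE.eigenvectorBasis i) ≠ 0 := (hE.eigenvectorBasis.orthonormal.ne_zero i) ∘ by simp
  have hKy : K *ᵥ (C *ᵥ hE.eigenvectorBasis i) =
      (hE.eigenvalues i : ℂ) • (C *ᵥ hE.eigenvectorBasis i) := by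
    rw [mulVec_mulVec, hKC, ← mulVec_mulVec, hE.mulVec_eigenvectorBasis, mulVec_smul,
      RCLike.real_smul_eq_coe_smul (K := ℂ)]
    rfl
  have hsq := sq_le_one_of_mulVec_eq_smul hK ((mulVec_injective_iff_isUnit.2 hC).ne he |>.trans_eq
    (mulVec_zero C)) hKy
  nlinarith

end Contraction

section LeftRightPow

variable {m : Type*} [Fintype m] [DecidableEq m] {σ : Matrix m m ℂ}

noncomputable def leftRightPow (σ : Matrix m m ℂ) (s r : ℝ) : Matrix (m × m) (m × m) ℂ :=
  (σ ^ r)ᵀ ⊗ₖ (σ ^ s)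

theorem leftRightPow_mulVec_vec (σ X : Matrix m m ℂ) (s r : ℝ) :
    leftRightPow σ s r *ᵥ vec X = vec (σ ^ s * X * σ ^ r) := by
  rw [leftRightPow, kronecker_mulVec_vec, transpose_transpose]

theorem posSemidef_leftRightPow (σ : Matrix m m ℂ) (s r : ℝ) : (leftRightPow σ s r).PosSemidef :=
  (posSemidef_rpow σ r).transpose.kronecker (posSemidef_rpow σ s)

theorem leftRightPow_mul (hσ : σ.PosDef) (s r s' r' : ℝ) :
    leftRightPow σ s r * leftRightPow σ s' r' = leftRightPow σ (s + s') (r + r') := by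
  rw [leftRightPow, leftRightPow, leftRightPow, ← mul_kronecker_mul, ← transpose_mul,
    rpow_mul_rpow hσ, rpow_mul_rpow hσ, add_comm r']

theorem leftRightPow_mul_assoc (hσ : σ.PosDef) (s r s' r' : ℝ) (X : Matrix (m × m) (m × m) ℂ) :
    leftRightPow σ s r * (leftRightPow σ s' r' * X) = leftRightPow σ (s + s') (r + r') * X := by
  rw [← Matrix.mul_assoc, leftRightPow_mul hσ]

theorem leftRightPow_zero_zero (hσ : σ.PosDef) : leftRightPow σ 0 0 = 1 := by
  rw [leftRightPow, CFC.rpow_zero σ hσ.posSemidef.nonneg, transpose_one, one_kronecker_one]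

theorem leftRightPow_one_zero (hσ : σ.PosDef) : leftRightPow σ 1 0 = 1 ⊗ₖ σ := by
  rw [leftRightPow, CFC.rpow_zero σ hσ.posSemidef.nonneg, CFC.rpow_one σ hσ.posSemidef.nonneg,
    transpose_one]

theorem leftRightPow_zero_one (hσ : σ.PosDef) : leftRightPow σ 0 1 = σᵀ ⊗ₖ 1 := by
  rw [leftRightPow, CFC.rpow_zero σ hσ.posSemidef.nonneg, CFC.rpow_one σ hσ.posSemidef.nonneg]

theorem isUnit_leftRightPow (hσ : σ.PosDef) (s r : ℝ) : IsUnit (leftRightPow σ s r) :=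
  IsUnit.of_mul_eq_one (leftRightPow σ (-s) (-r)) <| by
    rw [leftRightPow_mul hσ, add_neg_cancel, add_neg_cancel, leftRightPow_zero_zero hσ]

end LeftRightPow

section GeometricMean

variable {m : Type*} [Fintype m] [DecidableEq m] {σ : Matrix m m ℂ}
  {Z : Matrix (m × m) (m × m) ℂ}

theorem mul_leftRightPow_mul_le_of_posSemidef_fromBlocks (hσ : σ.PosDef) (hZH : Z.IsHermitian)
    (hZ : (fromBlocks (leftRightPow σ 1 0) Z Z (leftRightPow σ 0 1)).PosSemidef) :
    Z * leftRightPow σ (-1) 0 * Z ≤ leftRightPow σ 0 1 := by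
  have hL : (leftRightPow σ 1 0).PosDef :=
    (posSemidef_leftRightPow σ 1 0).posDef_iff_isUnit.2 (isUnit_leftRightPow hσ 1 0)
  have hinv : (leftRightPow σ 1 0)⁻¹ = leftRightPow σ (-1) 0 := inv_eq_right_inv <| by
    rw [leftRightPow_mul hσ]; norm_num [leftRightPow_zero_zero hσ]
  have := hL.isUnit.invertible
  have hZ' : (fromBlocks (leftRightPow σ 1 0) Z Zᴴ (leftRightPow σ 0 1)).PosSemidef := by
    rwa [hZH.eq]
  rw [PosDef.fromBlocks₁₁ _ _ hL, hZH.eq, hinv] at hZ'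
  exact le_iff.2 hZ'

theorem le_leftRightPow_half_of_posSemidef_fromBlocks (hσ : σ.PosDef)
    (hZ : (fromBlocks (leftRightPow σ 1 0) Z Z (leftRightPow σ 0 1)).PosSemidef) :
    Z ≤ leftRightPow σ (1 / 2) (1 / 2) := by
  have hLH (s r : ℝ) : (leftRightPow σ s r).IsHermitian :=
    (posSemidef_leftRightPow σ s r).isHermitian
  have hZH : Z.IsHermitian := (isHermitian_fromBlocks_iff.1 hZ.isHermitian).2.1
  set K := leftRightPow σ (-(1 / 2)) 0 * Z * leftRightPow σ 0 (-(1 / 2))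
  have hK : Kᴴ * K ≤ 1 := by
    convert (hLH 0 (-(1 / 2))).isSelfAdjoint.conjugate_le_conjugate
      (mul_leftRightPow_mul_le_of_posSemidef_fromBlocks hσ hZH hZ) using 1
    · simp only [K, conjTranspose_mul, hZH.eq, (hLH _ _).eq, Matrix.mul_assoc,
        leftRightPow_mul_assoc hσ]
      norm_num
    · rw [leftRightPow_mul hσ, leftRightPow_mul hσ]
      norm_num [leftRightPow_zero_zero hσ]
  set E := leftRightPow σ (-(1 / 4)) (-(1 / 4)) * Z * leftRightPow σ (-(1 / 4)) (-(1 / 4))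
  have hE : E ≤ 1 := by
    refine le_one_of_similar_contraction ?_ (isUnit_leftRightPow hσ (-(1 / 4)) (1 / 4)) ?_ hK
    · simpa only [(hLH _ _).eq] using
        isHermitian_conjTranspose_mul_mul (leftRightPow σ (-(1 / 4)) (-(1 / 4))) hZH
    · simp only [K, E, Matrix.mul_assoc, leftRightPow_mul_assoc hσ, leftRightPow_mul hσ]
      norm_num
  calc Z = leftRightPow σ (1 / 4) (1 / 4) * E * leftRightPow σ (1 / 4) (1 / 4) := by
        simp only [E, Matrix.mul_assoc, leftRightPow_mul_assoc hσ, leftRightPow_mul hσ]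
        norm_num [leftRightPow_zero_zero hσ]
    _ ≤ leftRightPow σ (1 / 4) (1 / 4) * 1 * leftRightPow σ (1 / 4) (1 / 4) :=
        (hLH _ _).isSelfAdjoint.conjugate_le_conjugate hE
    _ = leftRightPow σ (1 / 2) (1 / 2) := by
        rw [Matrix.mul_one, leftRightPow_mul hσ]; norm_num

end GeometricMean

section Concavity

variable {m : Type*} [Fintype m] [DecidableEq m]

theorem posSemidef_fromBlocks_leftRightPow {σ : Matrix m m ℂ} (hσ : σ.PosDef) :
    (fromBlocks (leftRightPow σ 1 0) (leftRightPow σ (1 / 2) (1 / 2))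
      (leftRightPow σ (1 / 2) (1 / 2)) (leftRightPow σ 0 1)).PosSemidef := by
  have h := posSemidef_conjTranspose_mul_self
    (fromCols (leftRightPow σ (1 / 2) 0) (leftRightPow σ 0 (1 / 2)))
  rw [conjTranspose_fromCols_eq_fromRows_conjTranspose, fromRows_mul_fromCols,
    (posSemidef_leftRightPow σ _ _).isHermitian.eq, (posSemidef_leftRightPow σ _ _).isHermitian.eq,
    leftRightPow_mul hσ, leftRightPow_mul hσ, leftRightPow_mul hσ, leftRightPow_mul hσ] at h
  norm_num at h
  exact h

variable {ι : Type*} [Fintype ι] {p : ι → ℝ} {σ : ι → Matrix m m ℂ}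

theorem sum_smul_leftRightPow_half_le (hp : ∀ i, 0 ≤ p i) (hσ : ∀ i, (σ i).PosDef)
    (hσsum : (∑ i, p i • σ i).PosDef) :
    ∑ i, p i • leftRightPow (σ i) (1 / 2) (1 / 2) ≤
      leftRightPow (∑ i, p i • σ i) (1 / 2) (1 / 2) := by
  refine le_leftRightPow_half_of_posSemidef_fromBlocks hσsum ?_
  convert posSemidef_sum Finset.univ fun i _ =>
    (posSemidef_fromBlocks_leftRightPow (hσ i)).smul (hp i) using 1
  simp only [leftRightPow_one_zero hσsum, leftRightPow_zero_one hσsum,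
    leftRightPow_one_zero (hσ _), leftRightPow_zero_one (hσ _)]
  ext (⟨a, b⟩ | ⟨a, b⟩) (⟨c, d⟩ | ⟨c, d⟩) <;>
    simp [Matrix.sum_apply, Finset.mul_sum, Finset.sum_mul, mul_left_comm, mul_assoc]

end Concavity

section Trace

variable {m : Type*} [Fintype m] [DecidableEq m]

theorem trace_conjTranspose_mul_rpow_mul_mul_rpow (W σ : Matrix m m ℂ) (s r : ℝ) :
    (Wᴴ * σ ^ s * W * σ ^ r).trace = star (vec W) ⬝ᵥ (leftRightPow σ s r *ᵥ vec W) := by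
  rw [leftRightPow_mulVec_vec, star_vec_dotProduct_vec, Matrix.mul_assoc, Matrix.mul_assoc,
    Matrix.mul_assoc]

theorem sum_trace_rpow_half_le {ι : Type*} [Fintype ι] {p : ι → ℝ} (hp : ∀ i, 0 ≤ p i)
    {σ : ι → Matrix m m ℂ} (hσ : ∀ i, (σ i).PosDef) (hσsum : (∑ i, p i • σ i).PosDef)
    (W : Matrix m m ℂ) :
    ∑ i, (p i : ℂ) * (Wᴴ * σ i ^ (1 / 2 : ℝ) * W * σ i ^ (1 / 2 : ℝ)).trace ≤
      (Wᴴ * (∑ i, p i • σ i) ^ (1 / 2 : ℝ) * W * (∑ i, p i • σ i) ^ (1 / 2 : ℝ)).trace := by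
  have h := (le_iff.1 (sum_smul_leftRightPow_half_le hp hσ hσsum)).dotProduct_mulVec_nonneg
    (vec W)
  rw [sub_mulVec, dotProduct_sub, sub_nonneg, sum_mulVec, dotProduct_sum] at h
  simpa only [trace_conjTranspose_mul_rpow_mul_mul_rpow, smul_mulVec, dotProduct_smul,
    Complex.real_smul] using h

end Trace

section JointConvexity

variable {m : Type*} {ι : Type*} [Fintype ι] {p : ι → ℝ}

theorem posDef_sum_smul (hp : ∀ i, 0 ≤ p i) (hp1 : ∑ i, p i = 1) {σ : ι → Matrix m m ℂ}
    (hσ : ∀ i, (σ i).PosDef) : (∑ i, p i • σ i).PosDef := by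
  classical
  obtain ⟨j, hj⟩ : ∃ j, p j ≠ 0 := by
    by_contra! h
    simp [h] at hp1
  rw [← Finset.add_sum_erase _ _ (Finset.mem_univ j)]
  exact ((hσ j).smul ((hp j).lt_of_ne' hj)).add_posSemidef
    (posSemidef_sum _ fun i _ => (hσ i).posSemidef.smul (hp i))

variable [Fintype m] [DecidableEq m]

theorem trace_rpow_neg_half_mul_le_sum (hp : ∀ i, 0 ≤ p i) {ρ σ : ι → Matrix m m ℂ}
    (hρ : ∀ i, (ρ i).IsHermitian) (hσ : ∀ i, (σ i).PosDef) (hσsum : (∑ i, p i • σ i).PosDef) :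
    ((∑ i, p i • σ i) ^ (-(1 / 2) : ℝ) * (∑ i, p i • ρ i) * (∑ i, p i • σ i) ^ (-(1 / 2) : ℝ) *
        (∑ i, p i • ρ i)).trace ≤
      ∑ i, (p i : ℂ) * (σ i ^ (-(1 / 2) : ℝ) * ρ i * σ i ^ (-(1 / 2) : ℝ) * ρ i).trace := by
  set σs := ∑ i, p i • σ i
  set ρs := ∑ i, p i • ρ i
  set W := σs ^ (-(1 / 2) : ℝ) * ρs * σs ^ (-(1 / 2) : ℝ)
  have hW : W.IsHermitian := by
    have hT := (posSemidef_rpow σs (-(1 / 2))).isHermitian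
    have hρs : ρs.IsHermitian :=
      isSelfAdjoint_sum _ fun i _ => (hρ i).smul (IsSelfAdjoint.all (p i))
    have h := isHermitian_conjTranspose_mul_mul (σs ^ (-(1 / 2) : ℝ)) hρs
    rwa [hT.eq] at h
  have hlin : (ρs * W).trace = ∑ i, (p i : ℂ) * (ρ i * W).trace := by
    simp only [ρs, Finset.sum_mul, trace_sum, smul_mul_assoc, trace_smul, Complex.real_smul]
  calc (W * ρs).trace
      = 2 * (ρs * W).trace - (Wᴴ * σs ^ (1 / 2 : ℝ) * W * σs ^ (1 / 2 : ℝ)).trace := by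
        rw [hW.eq, two_mul_trace_mul_sub_eq hσsum rfl]
    _ ≤ 2 * (ρs * W).trace -
          ∑ i, (p i : ℂ) * (Wᴴ * σ i ^ (1 / 2 : ℝ) * W * σ i ^ (1 / 2 : ℝ)).trace :=
        sub_le_sub_left (sum_trace_rpow_half_le hp hσ hσsum W) _
    _ = ∑ i, (p i : ℂ) *
          (2 * (ρ i * W).trace - (W * σ i ^ (1 / 2 : ℝ) * W * σ i ^ (1 / 2 : ℝ)).trace) := by
        simp only [hlin, hW.eq, Finset.mul_sum, mul_sub, Finset.sum_sub_distrib, mul_left_comm]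
    _ ≤ _ := Finset.sum_le_sum fun i _ => mul_le_mul_of_nonneg_left
        (two_mul_trace_mul_sub_le (hσ i) (hρ i) hW) (by exact_mod_cast hp i)

end JointConvexity

/-- Joint convexity of the exponential of the collision relative entropy:
for `ρ = ∑ᵢ pᵢ ρᵢ` and `σ = ∑ᵢ pᵢ σᵢ`,
`tr(σ^{-1/2} ρ σ^{-1/2} ρ) ≤ ∑ᵢ pᵢ tr(σᵢ^{-1/2} ρᵢ σᵢ^{-1/2} ρᵢ)`. -/
theorem stmt18 (n : ℕ) (ι : Type*) [Fintype ι]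
    (p : ι → ℝ) (hp : ∀ i, 0 ≤ p i) (hp1 : ∑ i, p i = 1)
    (ρᵢ σᵢ : ι → Matrix (Fin n) (Fin n) ℂ)
    (hρ : ∀ i, (ρᵢ i).PosSemidef) (hσ : ∀ i, (σᵢ i).PosDef) :
    (((pinvSqrt (∑ i, p i • σᵢ i)) * (∑ i, p i • ρᵢ i) *
        (pinvSqrt (∑ i, p i • σᵢ i)) * (∑ i, p i • ρᵢ i)).trace).re
      ≤ ∑ i, p i *
          ((pinvSqrt (σᵢ i) * ρᵢ i * pinvSqrt (σᵢ i) * ρᵢ i).trace).re := by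
  have hσsum := posDef_sum_smul hp hp1 hσ
  have h := trace_rpow_neg_half_mul_le_sum hp (fun i => (hρ i).isHermitian) hσ hσsum
  simp only [pinvSqrt_eq_rpow hσsum, pinvSqrt_eq_rpow (hσ _)]
  refine (Complex.le_def.1 h).1.trans_eq ?_
  simp only [Complex.re_sum, Complex.re_ofReal_mul]
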